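/- Every connected graph of the tetrahedral model with exactly one bubble is one of the three double tadpoles G_1^{(1)}, G_1^{(2)}, G_1^{(3)}, and each has exactly 4 faces: two faces of its defining color c and one face of each other color. -/

import Mathlib

/-!  A combinatorial model of the Feynman graphs of the rank-3 tetrahedral
(`O(N)^3`) tensor model.

A graph consists of a finite set `B` of bubbles (copies of the tetrahedron
`K_4`); each bubble has four vertices, so the vertex set is `B × Fin 4`.
Inside every bubble the edges of colors `1,2,3` are given once and for all by
the three fixed-point-free involutions of `Fin 4` (the proper 3-edge-coloring
of `K_4`).  The color-0 propagator edges, one per vertex, are encoded by a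
fixed-point-free involution `pairing` of the vertex set. -/

open Equiv

/-- The color-`c` (for `c ∈ {1,2,3}`, here `c : Fin 3`) perfect matching on the
four vertices of a tetrahedral bubble. -/
def bubblePerm : Fin 3 → Equiv.Perm (Fin 4) :=
  ![Equiv.swap 0 1 * Equiv.swap 2 3,
    Equiv.swap 0 2 * Equiv.swap 1 3,
    Equiv.swap 0 3 * Equiv.swap 1 2]

/-- A Feynman graph of the tetrahedral tensor model: a finite set of `K_4`
bubbles together with a fixed-point-free involution of the vertex set
describing the color-0 edges. -/
structure TGraph where
  B : Type
  [fintypeB : Fintype B]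
  [decB : DecidableEq B]
  pairing : Equiv.Perm (B × Fin 4)
  invol : ∀ v, pairing (pairing v) = v
  fixfree : ∀ v, pairing v ≠ v

attribute [instance] TGraph.fintypeB TGraph.decB

namespace TGraph

/-- The vertex set of a graph. -/
abbrev V (G : TGraph) : Type := G.B × Fin 4

/-- The permutation of the vertices given by the color-`c` edges inside the
bubbles. -/
def colPerm (G : TGraph) (c : Fin 3) : Equiv.Perm G.V :=
  (Equiv.refl G.B).prodCongr (bubblePerm c)

/-- The number of bubbles of a graph. -/
def b (G : TGraph) : ℕ := Fintype.card G.B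

/-- The subgroup of permutations of the vertices generated by the color-0
pairing and the color-`c` matching: its orbits are exactly the faces of
color `c` (cycles alternating colors `0` and `c`). -/
def faceGroup (G : TGraph) (c : Fin 3) : Subgroup (Equiv.Perm G.V) :=
  Subgroup.closure {G.pairing, G.colPerm c}

/-- Two vertices lie on the same face of color `c`. -/
def sameFace (G : TGraph) (c : Fin 3) (u v : G.V) : Prop :=
  u ∈ MulAction.orbit (G.faceGroup c) v

/-- The number of faces of color `c` of the graph. -/
noncomputable def numFaces (G : TGraph) (c : Fin 3) : ℕ :=
  Nat.card (MulAction.orbitRel.Quotient (G.faceGroup c) G.V)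

/-- The total number of faces of the graph. -/
noncomputable def F (G : TGraph) : ℕ := ∑ c : Fin 3, G.numFaces c

/-- The length of the face of color `c` through the vertex `v` (a face of
length `n` consists of `n` color-0 edges and `n` color-`c` edges, hence `2n`
vertices). -/
noncomputable def faceLength (G : TGraph) (c : Fin 3) (v : G.V) : ℕ :=
  Nat.card (MulAction.orbit (G.faceGroup c) v) / 2

/-- The subgroup generated by all edges of the graph. -/
def fullGroup (G : TGraph) : Subgroup (Equiv.Perm G.V) :=
  Subgroup.closure ({G.pairing} ∪ Set.range G.colPerm)

/-- A graph is connected if any vertex can be reached from any other one along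
its edges. -/
def Connected (G : TGraph) : Prop :=
  ∀ u v : G.V, u ∈ MulAction.orbit G.fullGroup v

/-- One step along an edge of the graph avoiding the color-0 edges whose
endpoints belong to `S`. -/
def stepAvoiding (G : TGraph) (S : Set G.V) (u v : G.V) : Prop :=
  (∃ c, v = G.colPerm c u) ∨ (v = G.pairing u ∧ u ∉ S ∧ v ∉ S)

/-- Reachability in the graph with the color-0 edges meeting `S` removed. -/
def reachAvoiding (G : TGraph) (S : Set G.V) : G.V → G.V → Prop :=
  Relation.ReflTransGen (G.stepAvoiding S)

/-- The pair of color-0 edges through the vertices `u` and `w` disconnects the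
graph when removed.  Together with the requirement that the two edges be
distinct, this is the notion of a 2-edge-cut of color-0 edges. -/
def CutDisconnects (G : TGraph) (u w : G.V) : Prop :=
  ¬ ∀ x y : G.V, G.reachAvoiding {u, G.pairing u, w, G.pairing w} x y

/-- Two vertices are connected by a 2-point function if they are joined by a
color-0 edge, or if their two (distinct) color-0 edges form a 2-edge-cut. -/
def TwoPoint (G : TGraph) (x y : G.V) : Prop :=
  G.pairing x = y ∨ (y ≠ x ∧ y ≠ G.pairing x ∧ G.CutDisconnects x y)

/-- The flip of the two color-0 edges `{u, pairing u}` and `{w, pairing w}`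
(assumed distinct) which reconnects `u` with `w` (and `pairing u` with
`pairing w`): the pairing is conjugated by the transposition exchanging
`pairing u` and `w`.  The other flip of this pair of edges is
`G.flip u (G.pairing w)`. -/
def flip (G : TGraph) (u w : G.V) : TGraph where
  B := G.B
  pairing := Equiv.swap (G.pairing u) w * G.pairing * Equiv.swap (G.pairing u) w
  invol := by
    intro v
    simp only [Equiv.Perm.mul_apply, Equiv.swap_apply_self, G.invol]
  fixfree := by
    intro v h
    simp only [Equiv.Perm.mul_apply] at h
    have h' : G.pairing (Equiv.swap (G.pairing u) w v) = Equiv.swap (G.pairing u) w v := by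
      have := congrArg (Equiv.swap (G.pairing u) w) h
      simpa using this
    exact G.fixfree _ h'

/-- The face of color `c` through the color-0 edge `{v, pairing v}` has
length 2 (it consists of this edge, a color-`c` edge, a second color-0 edge
and a second color-`c` edge closing the cycle). -/
def FaceLen2 (G : TGraph) (c : Fin 3) (v : G.V) : Prop :=
  G.pairing v ≠ G.colPerm c v ∧
    G.pairing (G.colPerm c (G.pairing v)) = G.colPerm c v

/-- A proper face of length 2 of color `c` through `v`: a face of length 2
whose two color-0 edges connect two distinct bubbles. -/
def ProperFace2 (G : TGraph) (c : Fin 3) (v : G.V) : Prop :=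
  G.FaceLen2 c v ∧ (G.pairing v).1 ≠ v.1

/-- A graph maximizes the number of faces if it is connected and no connected
graph with the same number of bubbles has more faces. -/
def MaximizesFaces (G : TGraph) : Prop :=
  G.Connected ∧ ∀ H : TGraph, H.Connected → H.b = G.b → H.F ≤ G.F

/-- Isomorphisms of graphs: bijections of the vertex sets commuting with the
color-0 pairing and with the colored matchings inside the bubbles. -/
structure Iso (G H : TGraph) where
  toEquiv : G.V ≃ H.V
  map_pairing : ∀ v, toEquiv (G.pairing v) = H.pairing (toEquiv v)
  map_col : ∀ c v, toEquiv (G.colPerm c v) = H.colPerm c (toEquiv v)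

/-- Two graphs are isomorphic. -/
def IsIso (G H : TGraph) : Prop := Nonempty (Iso G H)

end TGraph

open TGraph

/-- The leading-order two-bubble graph `G_2`: two tetrahedral bubbles with
corresponding vertices joined by four color-0 edges, so that all six faces
have length 2. -/
def G2 : TGraph where
  B := Fin 2
  pairing := (Equiv.swap (0 : Fin 2) 1).prodCongr (Equiv.refl (Fin 4))
  invol := by
    rintro ⟨i, k⟩
    simp [Equiv.prodCongr_apply, Equiv.swap_apply_self]
  fixfree := by
    rintro ⟨i, k⟩ h
    have hi : Equiv.swap (0 : Fin 2) 1 i = i := congrArg Prod.fst h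
    fin_cases i <;> simp_all

/-- The double tadpole `G_1^{(c)}`: one tetrahedral bubble whose two color-0
edges each join two vertices already adjacent by an edge of color `c`. -/
def G1 (c : Fin 3) : TGraph where
  B := Fin 1
  pairing := (Equiv.refl (Fin 1)).prodCongr (bubblePerm c)
  invol := by
    rintro ⟨i, k⟩
    have hk : ∀ j : Fin 4, bubblePerm c (bubblePerm c j) = j := by
      fin_cases c <;> decide
    simp [Equiv.prodCongr_apply, hk]
  fixfree := by
    rintro ⟨i, k⟩ h
    have hk : bubblePerm c k = k := congrArg Prod.snd h
    have hne : ∀ j : Fin 4, bubblePerm c j ≠ j := by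
      fin_cases c <;> decide
    exact hne k hk

namespace TGraph

variable (H K : TGraph)

/-- The image of a vertex of `H` in the glued graph. -/
def inlV (x : H.V) : (H.B ⊕ K.B) × Fin 4 := (Sum.inl x.1, x.2)

/-- The image of a vertex of `K` in the glued graph. -/
def inrV (y : K.V) : (H.B ⊕ K.B) × Fin 4 := (Sum.inr y.1, y.2)

/-- The underlying function of the pairing of the graph obtained by gluing `H`
and `K` along the color-0 edges `{p, H.pairing p}` and `{q, K.pairing q}`:
these two edges are cut and the half-edges are reglued as `p — q` and
`H.pairing p — K.pairing q`.  The new pair of edges is a 2-edge-cut of the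
resulting graph when `H` and `K` are connected. -/
def glueFun (p : H.V) (q : K.V) : (H.B ⊕ K.B) × Fin 4 → (H.B ⊕ K.B) × Fin 4 :=
  fun z =>
    match z with
    | (Sum.inl u, k) =>
        if (u, k) = p then inrV H K q
        else if (u, k) = H.pairing p then inrV H K (K.pairing q)
        else inlV H K (H.pairing (u, k))
    | (Sum.inr u, k) =>
        if (u, k) = q then inlV H K p
        else if (u, k) = K.pairing q then inlV H K (H.pairing p)
        else inrV H K (K.pairing (u, k))

theorem glueFun_inlV (p : H.V) (q : K.V) (x : H.V) :
    glueFun H K p q (inlV H K x) =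
      if x = p then inrV H K q
      else if x = H.pairing p then inrV H K (K.pairing q)
      else inlV H K (H.pairing x) := by
  cases x
  rfl

theorem glueFun_inrV (p : H.V) (q : K.V) (y : K.V) :
    glueFun H K p q (inrV H K y) =
      if y = q then inlV H K p
      else if y = K.pairing q then inlV H K (H.pairing p)
      else inrV H K (K.pairing y) := by
  cases y
  rfl

theorem inlV_injective : Function.Injective (inlV H K) := by
  rintro ⟨u, k⟩ ⟨u', k'⟩ h
  have h1 : (Sum.inl u : H.B ⊕ K.B) = Sum.inl u' := congrArg Prod.fst h
  have h2 : k = k' := congrArg Prod.snd h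
  exact Prod.ext (Sum.inl_injective h1) h2

theorem inrV_injective : Function.Injective (inrV H K) := by
  rintro ⟨u, k⟩ ⟨u', k'⟩ h
  have h1 : (Sum.inr u : H.B ⊕ K.B) = Sum.inr u' := congrArg Prod.fst h
  have h2 : k = k' := congrArg Prod.snd h
  exact Prod.ext (Sum.inr_injective h1) h2

theorem inlV_ne_inrV (x : H.V) (y : K.V) : inlV H K x ≠ inrV H K y := by
  intro h
  exact Sum.inl_ne_inr (congrArg Prod.fst h)

theorem glueFun_invol_inl (p : H.V) (q : K.V) (x : H.V) :
    glueFun H K p q (glueFun H K p q (inlV H K x)) = inlV H K x := by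
  rw [glueFun_inlV]
  by_cases h1 : x = p
  · rw [if_pos h1, glueFun_inrV, if_pos rfl, h1]
  · by_cases h2 : x = H.pairing p
    · rw [if_neg h1, if_pos h2, glueFun_inrV,
        if_neg (fun h => K.fixfree q h), if_pos rfl, h2]
    · have hne1 : H.pairing x ≠ p := by
        intro h; apply h2
        have := congrArg H.pairing h
        rw [H.invol] at this; exact this
      have hne2 : H.pairing x ≠ H.pairing p := fun h => h1 (H.pairing.injective h)
      rw [if_neg h1, if_neg h2, glueFun_inlV, if_neg hne1, if_neg hne2, H.invol]

theorem glueFun_invol_inr (p : H.V) (q : K.V) (y : K.V) :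
    glueFun H K p q (glueFun H K p q (inrV H K y)) = inrV H K y := by
  rw [glueFun_inrV]
  by_cases h1 : y = q
  · rw [if_pos h1, glueFun_inlV, if_pos rfl, h1]
  · by_cases h2 : y = K.pairing q
    · rw [if_neg h1, if_pos h2, glueFun_inlV,
        if_neg (fun h => H.fixfree p h), if_pos rfl, h2]
    · have hne1 : K.pairing y ≠ q := by
        intro h; apply h2
        have := congrArg K.pairing h
        rw [K.invol] at this; exact this
      have hne2 : K.pairing y ≠ K.pairing q := fun h => h1 (K.pairing.injective h)
      rw [if_neg h1, if_neg h2, glueFun_inrV, if_neg hne1, if_neg hne2, K.invol]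

theorem glueFun_involutive (p : H.V) (q : K.V) :
    Function.Involutive (glueFun H K p q) := by
  rintro ⟨(u | u), k⟩
  · exact glueFun_invol_inl H K p q (u, k)
  · exact glueFun_invol_inr H K p q (u, k)

theorem glueFun_fixfree (p : H.V) (q : K.V) :
    ∀ z, glueFun H K p q z ≠ z := by
  have hl : ∀ x : H.V, glueFun H K p q (inlV H K x) ≠ inlV H K x := by
    intro x h
    rw [glueFun_inlV] at h
    by_cases h1 : x = p
    · rw [if_pos h1] at h
      exact inlV_ne_inrV H K x q h.symm
    · by_cases h2 : x = H.pairing p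
      · rw [if_neg h1, if_pos h2] at h
        exact inlV_ne_inrV H K x (K.pairing q) h.symm
      · rw [if_neg h1, if_neg h2] at h
        exact H.fixfree x (inlV_injective H K h)
  have hr : ∀ y : K.V, glueFun H K p q (inrV H K y) ≠ inrV H K y := by
    intro y h
    rw [glueFun_inrV] at h
    by_cases h1 : y = q
    · rw [if_pos h1] at h
      exact inlV_ne_inrV H K p y h
    · by_cases h2 : y = K.pairing q
      · rw [if_neg h1, if_pos h2] at h
        exact inlV_ne_inrV H K (H.pairing p) y h
      · rw [if_neg h1, if_neg h2] at h
        exact K.fixfree y (inrV_injective H K h)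
  rintro ⟨(u | u), k⟩
  · exact hl (u, k)
  · exact hr (u, k)

/-- Gluing two graphs along a pair of color-0 edges.  When `H` and `K` are
connected, the two new color-0 edges form a 2-edge-cut of the glued graph, and
conversely every connected graph with a color-0 2-edge-cut arises this way
from the two closed graphs obtained by cutting the two edges and closing each
side. -/
def glue (p : H.V) (q : K.V) : TGraph where
  B := H.B ⊕ K.B
  pairing := (glueFun_involutive H K p q).toPerm
  invol := fun v => glueFun_involutive H K p q v
  fixfree := fun v => glueFun_fixfree H K p q v

/-- Insertion of a melonic dipole (the 2-point graph obtained by cutting one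
color-0 edge of `G_2`) on the color-0 edge `{v, G.pairing v}` of `G`. -/
def insertDipole (G : TGraph) (v : G.V) : TGraph :=
  glue G G2 v ((0 : Fin 2), (0 : Fin 4))

end TGraph

open TGraph

/-- Melonic graphs (up to isomorphism): `G_2` is melonic, and inserting a
melonic dipole on any color-0 edge of a melonic graph yields a melonic
graph. -/
inductive IsMelonic : TGraph → Prop
  | base {G : TGraph} (h : IsIso G G2) : IsMelonic G
  | insert {G : TGraph} (hG : IsMelonic G) (v : G.V) {H : TGraph}
      (h : IsIso H (G.insertDipole v)) : IsMelonic H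

/-- Double tadpoles decorated with melonic 2-point functions (up to
isomorphism): these are exactly the graphs obtained from one of the double
tadpoles `G_1^{(c)}` by repeatedly inserting melonic dipoles on color-0 edges,
i.e. double tadpoles whose two color-0 edges are replaced by melonic 2-point
functions. -/
inductive IsDecoratedTadpole : TGraph → Prop
  | base {G : TGraph} (c : Fin 3) (h : IsIso G (G1 c)) : IsDecoratedTadpole G
  | insert {G : TGraph} (hG : IsDecoratedTadpole G) (v : G.V) {H : TGraph}
      (h : IsIso H (G.insertDipole v)) : IsDecoratedTadpole H

/-! With a single bubble the color-0 pairing is a fixed-point-free involution of the four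
vertices of `K_4`, and the only such involutions are the three color matchings, so the graph
is some `G_1^{(c)}`. In `G_1^{(c)}` the color-0 edges run parallel to the color-`c` edges, so
each face of color `c` is a color-0 edge together with its parallel color-`c` edge: two faces. For `c' ≠ c` the
matchings of colors `c` and `c'` generate the Klein four-group, which is transitive on the
four vertices: one face. -/

theorem MulAction.nat_card_orbitRel_quotient_eq {M α β : Type*} [Group M] [MulAction M α]
    {φ : α → β} (hφ : Function.Surjective φ)
    (horbit : ∀ u v, u ∈ MulAction.orbit M v ↔ φ u = φ v) :
    Nat.card (MulAction.orbitRel.Quotient M α) = Nat.card β :=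
  Nat.card_congr <| (Quotient.congrRight horbit).trans (Setoid.quotientKerEquivOfSurjective φ hφ)

theorem Subgroup.mem_closure_singleton_of_mul_self_eq_one {M : Type*} [Group M] {p g : M}
    (hp : p * p = 1) (hg : g ∈ Subgroup.closure {p}) : g = 1 ∨ g = p := by
  induction hg using Subgroup.closure_induction with
  | mem x hx => exact Or.inr hx
  | one => exact Or.inl rfl
  | mul x y _ _ hx hy =>
    rcases hx with rfl | rfl <;> rcases hy with rfl | rfl <;> simp [hp]
  | inv x _ hx =>
    rcases hx with rfl | rfl
    · simp
    · exact Or.inr (inv_eq_of_mul_eq_one_left hp)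

section FourVertices

set_option maxRecDepth 10000 in
theorem exists_bubblePerm_eq : ∀ f : Fin 4 → Fin 4, (∀ k, f (f k) = k) → (∀ k, f k ≠ k) →
    ∃ c, ∀ k, bubblePerm c k = f k := by
  decide

theorem bubblePerm_apply_apply (c : Fin 3) (k : Fin 4) : bubblePerm c (bubblePerm c k) = k := by
  revert c k
  decide

theorem eq_bubblePerm_mul_bubblePerm_of_ne {c c' : Fin 3} (h : c' ≠ c) (k l : Fin 4) :
    l = k ∨ l = bubblePerm c k ∨ l = bubblePerm c' k ∨ l = bubblePerm c (bubblePerm c' k) := by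
  revert c c' k l
  decide

/-- Tells the two color-`c` edges of `K_4` apart: `true` on the one through vertex `0`. -/
def tadpoleFaceLabel (c : Fin 3) (k : Fin 4) : Bool := decide (k = 0 ∨ k = bubblePerm c 0)

theorem tadpoleFaceLabel_surjective (c : Fin 3) : Function.Surjective (tadpoleFaceLabel c) := by
  revert c
  decide

theorem tadpoleFaceLabel_eq_iff (c : Fin 3) (k l : Fin 4) :
    tadpoleFaceLabel c k = tadpoleFaceLabel c l ↔ k = l ∨ k = bubblePerm c l := by
  revert c k l
  decide

end FourVertices

instance (c : Fin 3) : Unique (G1 c).B := inferInstanceAs (Unique (Fin 1))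

namespace TGraph

theorem colPerm_mul_self (G : TGraph) (c : Fin 3) : G.colPerm c * G.colPerm c = 1 := by
  ext v : 1
  exact Prod.ext rfl (bubblePerm_apply_apply c v.2)

theorem numFaces_eq_nat_card {G : TGraph} {c : Fin 3} {β : Type*} {φ : G.V → β}
    (hφ : Function.Surjective φ) (hface : ∀ u v, G.sameFace c u v ↔ φ u = φ v) :
    G.numFaces c = Nat.card β :=
  MulAction.nat_card_orbitRel_quotient_eq hφ hface

theorem isIso_G1_of_b_eq_one {G : TGraph} (hb : G.b = 1) : ∃ c, IsIso G (G1 c) := by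
  obtain ⟨e⟩ : Nonempty (G.B ≃ Fin 1) := ⟨Fintype.equivFinOfCardEq hb⟩
  have : Subsingleton G.B := e.subsingleton
  let f : Fin 4 → Fin 4 := fun k => (G.pairing (e.symm 0, k)).2
  have hpair : ∀ v : G.V, G.pairing v = (v.1, f v.2) := by
    rintro ⟨b, k⟩
    obtain rfl := Subsingleton.elim b (e.symm 0)
    exact Prod.ext (Subsingleton.elim _ _) rfl
  obtain ⟨c, hc⟩ := exists_bubblePerm_eq f
    (fun k => by simpa [hpair] using congrArg Prod.snd (G.invol (e.symm 0, k)))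
    (fun k hk => G.fixfree (e.symm 0, k) (by rw [hpair, hk]))
  refine ⟨c, ⟨e.prodCongr (Equiv.refl _), fun v => ?_, fun _ _ => rfl⟩⟩
  rw [hpair]
  exact Prod.ext (Subsingleton.elim _ _) (hc v.2).symm

section PairingEqColPerm

variable {G : TGraph} {c : Fin 3}

theorem faceGroup_eq_closure_of_pairing_eq (h : G.pairing = G.colPerm c) :
    G.faceGroup c = Subgroup.closure {G.colPerm c} := by
  rw [faceGroup, h, Set.pair_eq_singleton]

theorem sameFace_iff_of_pairing_eq (h : G.pairing = G.colPerm c) {u v : G.V} :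
    G.sameFace c u v ↔ u = v ∨ u = G.colPerm c v := by
  rw [sameFace, faceGroup_eq_closure_of_pairing_eq h]
  constructor
  · rintro ⟨⟨g, hg⟩, rfl⟩
    rcases Subgroup.mem_closure_singleton_of_mul_self_eq_one (G.colPerm_mul_self c) hg with
      rfl | rfl
    · exact Or.inl rfl
    · exact Or.inr rfl
  · rintro (rfl | rfl)
    · exact MulAction.mem_orbit_self u
    · exact ⟨⟨G.colPerm c, Subgroup.subset_closure rfl⟩, rfl⟩

theorem sameFace_of_pairing_eq (h : G.pairing = G.colPerm c) {c' : Fin 3} (hc : c' ≠ c)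
    {u v : G.V} (huv : u.1 = v.1) : G.sameFace c' u v := by
  have hσ : G.colPerm c ∈ G.faceGroup c' := Subgroup.subset_closure (by simp [h])
  have hτ : G.colPerm c' ∈ G.faceGroup c' := Subgroup.subset_closure (by simp)
  have key : ∀ g ∈ G.faceGroup c', g v = u → G.sameFace c' u v := fun g hg h => ⟨⟨g, hg⟩, h⟩
  rcases eq_bubblePerm_mul_bubblePerm_of_ne hc v.2 u.2 with h' | h' | h' | h'
  · exact key 1 (one_mem _) (Prod.ext huv.symm h'.symm)
  · exact key _ hσ (Prod.ext huv.symm h'.symm)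
  · exact key _ hτ (Prod.ext huv.symm h'.symm)
  · exact key _ (mul_mem hσ hτ) (Prod.ext huv.symm h'.symm)

end PairingEqColPerm

end TGraph

theorem G1_pairing (c : Fin 3) : (G1 c).pairing = (G1 c).colPerm c := rfl

theorem G1_ext_iff {c : Fin 3} {u v : (G1 c).V} : u = v ↔ u.2 = v.2 :=
  ⟨congrArg Prod.snd, Prod.ext (Subsingleton.elim _ _)⟩

theorem G1_numFaces_self (c : Fin 3) : (G1 c).numFaces c = 2 := by
  rw [numFaces_eq_nat_card (φ := fun v => tadpoleFaceLabel c v.2), Nat.card_eq_fintype_card,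
    Fintype.card_bool]
  · exact (tadpoleFaceLabel_surjective c).comp Prod.snd_surjective
  · intro u v
    rw [sameFace_iff_of_pairing_eq (G1_pairing c), G1_ext_iff, G1_ext_iff,
      tadpoleFaceLabel_eq_iff]
    rfl

theorem G1_numFaces_of_ne {c c' : Fin 3} (h : c' ≠ c) : (G1 c).numFaces c' = 1 := by
  rw [numFaces_eq_nat_card (φ := fun _ => ()) (fun _ => ⟨default, rfl⟩), Nat.card_unique]
  exact fun u v => iff_of_true (sameFace_of_pairing_eq (G1_pairing c) h
    (Subsingleton.elim _ _)) rfl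

theorem G1_F (c : Fin 3) : (G1 c).F = 4 := by
  have hothers : ∑ c' ∈ {c}ᶜ, (G1 c).numFaces c' = ∑ _c' ∈ ({c}ᶜ : Finset (Fin 3)), 1 :=
    Finset.sum_congr rfl fun c' hc' => G1_numFaces_of_ne (by simpa using hc')
  rw [F, Fintype.sum_eq_add_sum_compl c, G1_numFaces_self, hothers, Finset.sum_const,
    Finset.card_compl, Finset.card_singleton, Fintype.card_fin, smul_eq_mul, mul_one]

/-- Every connected graph of the tetrahedral model with exactly
one bubble is one of the three double tadpoles `G_1^{(c)}`, and each has
exactly 4 faces: two faces of its defining color `c` and one face of each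
other color. -/
theorem one_bubble_classification :
    (∀ G : TGraph, G.Connected → G.b = 1 → ∃ c, IsIso G (G1 c)) ∧
      ∀ c : Fin 3, (G1 c).numFaces c = 2 ∧
        (∀ c', c' ≠ c → (G1 c).numFaces c' = 1) ∧ (G1 c).F = 4 :=
  ⟨fun _ _ hb => isIso_G1_of_b_eq_one hb,
    fun c => ⟨G1_numFaces_self c, fun _ => G1_numFaces_of_ne, G1_F c⟩⟩
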